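/- arXiv:2408.15285 — 3 statements merged into one kernel-verified Lean document; each statement's English description precedes it below -/
import Mathlib

section
/- For every δ > 0 there exists a constant c > 0 with the following property: for every z ∈ ℂ such that cos z ≠ 0, |z − kπ| ≥ δ for all k ∈ ℤ, and |z − w| ≥ δ for every real w with cos w = 1/4 or cos w = −1/4, one has |(15/4)·cos z·sin² z − (sin⁴ z)/(4·cos z)| ≥ c·e^{3·|Im z|}. -/
/-!
Clearing the denominator, `4 cos z · f₀ z = g₀ z := sin² z (16 cos² z - 1)`, an entire
`π`-periodic function whose zeros are `πℤ` and the (necessarily real) solutions of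
`cos z = ±1/4`. Since `‖sin z‖²` and `‖cos z‖²` are at least `sinh² (Im z)`, `‖g₀ z‖` grows like
`e^{4|Im z|}` once `|Im z| ≥ 1`. In the remaining strip, periodicity reduces to a compact
rectangle with the `δ`-neighbourhoods of the zeros removed, where `‖g₀‖` has a positive minimum.
Hence `‖g₀ z‖ ≥ c e^{4|Im z|}` away from the zeros, and dividing by `‖4 cos z‖ ≤ 4 e^{|Im z|}`
gives the bound for `f₀`.
-/

open Complex Set

theorem exists_pos_mul_exp_le_norm_of_periodic {E : Type*} [NormedAddCommGroup E] {g : ℂ → E}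
    (hg : Continuous g) {p : ℝ} (hp : 0 < p) (hper : Function.Periodic g p)
    {a R c₀ δ : ℝ} (hc₀ : 0 < c₀) (hδ : 0 < δ)
    (hgrow : ∀ z : ℂ, R ≤ |z.im| → c₀ * Real.exp (a * |z.im|) ≤ ‖g z‖) :
    ∃ c > 0, ∀ z : ℂ, (∀ w, g w = 0 → δ ≤ ‖z - w‖) →
      c * Real.exp (a * |z.im|) ≤ ‖g z‖ := by
  set K : Set ℂ := Icc 0 p ×ℂ Icc (-R) R ∩ {z | ∀ w, g w = 0 → δ ≤ ‖z - w‖}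
  have hK : IsCompact K := by
    refine (isCompact_Icc.reProdIm isCompact_Icc).inter_right ?_
    simp only [ofPred_forall]
    exact isClosed_iInter fun w => isClosed_iInter fun _ =>
      isClosed_le continuous_const (by fun_prop)
  obtain ⟨m, hm, hmK⟩ : ∃ m > 0, ∀ z ∈ K, m ≤ ‖g z‖ := by
    refine hK.exists_forall_le' hg.norm.continuousOn fun z hz => norm_pos_iff.2 fun h0 => ?_
    simpa [hδ.not_ge] using hz.2 z h0
  refine ⟨min c₀ (m / Real.exp (|a| * R)), by positivity, fun z hz => ?_⟩
  rcases le_or_gt R |z.im| with hR | hR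
  · exact (mul_le_mul_of_nonneg_right (min_le_left _ _) (Real.exp_pos _).le).trans (hgrow z hR)
  set n : ℤ := ⌊z.re / p⌋
  have hzK : z - n * p ∈ K := by
    refine ⟨⟨⟨?_, ?_⟩, ?_⟩, fun w hw => ?_⟩
    · simpa using Int.sub_floor_div_mul_nonneg z.re hp
    · simpa using (Int.sub_floor_div_mul_lt z.re hp).le
    · simpa using abs_le.1 hR.le
    · rw [sub_sub, add_comm]
      exact hz _ (by rw [hper.int_mul n w, hw])
  calc min c₀ (m / Real.exp (|a| * R)) * Real.exp (a * |z.im|)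
      ≤ m / Real.exp (|a| * R) * Real.exp (|a| * R) := by
        gcongr
        · exact min_le_right _ _
        · nlinarith [abs_nonneg a, abs_nonneg z.im, le_abs_self a]
    _ = m := div_mul_cancel₀ m (Real.exp_ne_zero _)
    _ ≤ ‖g (z - n * p)‖ := hmK _ hzK
    _ = ‖g z‖ := by rw [hper.sub_int_mul_eq n]

theorem Real.exp_two_mul_abs_sub_two_le (y : ℝ) :
    Real.exp (2 * |y|) - 2 ≤ 4 * Real.sinh y ^ 2 := by
  have h := Real.cosh_two_mul |y|
  rw [Real.cosh_sq, Real.cosh_eq, ← Real.abs_sinh, sq_abs] at h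
  linarith [Real.exp_pos (-(2 * |y|))]

namespace Complex

theorem sq_norm_sin (z : ℂ) : ‖sin z‖ ^ 2 = Real.sin z.re ^ 2 + Real.sinh z.im ^ 2 := by
  rw [sin_eq, ← ofReal_sin, ← ofReal_cosh, ← ofReal_cos, ← ofReal_sinh, ← ofReal_mul,
    ← ofReal_mul, ← normSq_eq_norm_sq, normSq_add_mul_I]
  linear_combination Real.sinh z.im ^ 2 * Real.sin_sq_add_cos_sq z.re +
    Real.sin z.re ^ 2 * Real.cosh_sq z.im

theorem sq_norm_cos (z : ℂ) : ‖cos z‖ ^ 2 = Real.cos z.re ^ 2 + Real.sinh z.im ^ 2 := by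
  rw [cos_eq, ← ofReal_sin, ← ofReal_cosh, ← ofReal_cos, ← ofReal_sinh, ← ofReal_mul,
    ← ofReal_mul, sub_eq_add_neg, ← neg_mul, ← ofReal_neg, ← normSq_eq_norm_sq,
    normSq_add_mul_I]
  linear_combination Real.sinh z.im ^ 2 * Real.sin_sq_add_cos_sq z.re +
    Real.cos z.re ^ 2 * Real.cosh_sq z.im

theorem norm_cos_le_exp_abs_im (z : ℂ) : ‖cos z‖ ≤ Real.exp |z.im| := by
  have hcosh : Real.cosh z.im ≤ Real.exp |z.im| := by
    rw [← Real.cosh_abs, Real.cosh_eq]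
    linarith [Real.exp_le_exp.2 (neg_le_self (abs_nonneg z.im))]
  refine le_trans ((sq_le_sq₀ (norm_nonneg _) (Real.cosh_pos _).le).1 ?_) hcosh
  rw [sq_norm_cos, Real.cosh_sq]
  linarith [Real.cos_sq_le_one z.re]

theorem eq_ofReal_of_cos_eq {w : ℂ} {a : ℝ} (ha : |a| ≤ 1) (h : cos w = a) :
    ∃ r : ℝ, Real.cos r = a ∧ w = r := by
  obtain ⟨ha₁, ha₂⟩ := abs_le.1 ha
  have hcos : cos (Real.arccos a : ℂ) = cos w := by
    rw [← ofReal_cos, Real.cos_arccos ha₁ ha₂, h]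
  obtain ⟨r, rfl⟩ : ∃ r : ℝ, w = r := by
    obtain ⟨k, hk | hk⟩ := cos_eq_cos_iff.1 hcos
    · exact ⟨2 * k * Real.pi + Real.arccos a, by rw [hk]; push_cast; ring⟩
    · exact ⟨2 * k * Real.pi - Real.arccos a, by rw [hk]; push_cast; ring⟩
  exact ⟨r, by exact_mod_cast h, rfl⟩

end Complex

noncomputable def f₀ (z : ℂ) : ℂ := 15 / 4 * cos z * sin z ^ 2 - sin z ^ 4 / (4 * cos z)

noncomputable def g₀ (z : ℂ) : ℂ := sin z ^ 2 * (16 * cos z ^ 2 - 1)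

theorem four_mul_cos_mul_f₀ {z : ℂ} (hz : cos z ≠ 0) : 4 * cos z * f₀ z = g₀ z := by
  unfold f₀ g₀
  field_simp
  linear_combination (-sin z ^ 2) * sin_sq_add_cos_sq z

theorem continuous_g₀ : Continuous g₀ := by
  unfold g₀
  fun_prop

theorem g₀_periodic : Function.Periodic g₀ Real.pi := by
  intro z
  simp [g₀, sin_add_pi, cos_add_pi]

theorem eq_int_mul_pi_or_ofReal_of_g₀_eq_zero {w : ℂ} (hw : g₀ w = 0) :
    (∃ k : ℤ, w = k * Real.pi) ∨
      ∃ r : ℝ, (Real.cos r = 1 / 4 ∨ Real.cos r = -(1 / 4)) ∧ w = r := by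
  rcases mul_eq_zero.1 hw with hsin | hcos
  · exact .inl (sin_eq_zero_iff.1 (pow_eq_zero_iff two_ne_zero |>.1 hsin))
  right
  have hfactor : (4 * cos w - 1) * (4 * cos w + 1) = 0 := by linear_combination hcos
  rcases mul_eq_zero.1 hfactor with h | h
  · obtain ⟨r, hr, rfl⟩ := eq_ofReal_of_cos_eq (a := 1 / 4) (by norm_num [abs_of_pos])
      (by push_cast; linear_combination h / 4)
    exact ⟨r, .inl hr, rfl⟩
  · obtain ⟨r, hr, rfl⟩ := eq_ofReal_of_cos_eq (a := -(1 / 4)) (by norm_num [abs_of_pos])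
      (by push_cast; linear_combination h / 4)
    exact ⟨r, .inr hr, rfl⟩

theorem inv_eight_mul_exp_le_norm_g₀ {z : ℂ} (hz : 1 ≤ |z.im|) :
    8⁻¹ * Real.exp (4 * |z.im|) ≤ ‖g₀ z‖ := by
  set E := Real.exp (2 * |z.im|)
  have hE : 5 ≤ E := by
    nlinarith [Real.quadratic_le_exp_of_nonneg (by positivity : 0 ≤ 2 * |z.im|)]
  have hsinh := Real.exp_two_mul_abs_sub_two_le z.im
  have hsin : E - 2 ≤ 4 * ‖sin z‖ ^ 2 := by
    nlinarith [sq_norm_sin z, sq_nonneg (Real.sin z.re)]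
  have hcos : 4 * E - 9 ≤ ‖16 * cos z ^ 2 - 1‖ := by
    have := norm_sub_norm_le (16 * cos z ^ 2) 1
    rw [norm_mul, norm_pow, norm_one, Complex.norm_ofNat] at this
    nlinarith [sq_norm_cos z, sq_nonneg (Real.cos z.re)]
  have hE4 : Real.exp (4 * |z.im|) = E ^ 2 := by
    rw [← Real.exp_nat_mul]
    ring_nf
  rw [g₀, norm_mul, norm_pow, hE4]
  nlinarith [sq_nonneg ‖sin z‖]

/-- Exponential lower bound for
`f₀(z) = (15/4)·cos z·sin² z − sin⁴ z/(4 cos z)` away from its zeros. -/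
theorem stmt_5 (δ : ℝ) (hδ : 0 < δ) :
    ∃ c : ℝ, 0 < c ∧
      ∀ z : ℂ, Complex.cos z ≠ 0 →
        (∀ k : ℤ, δ ≤ ‖z - (k : ℂ) * Real.pi‖) →
        (∀ w : ℝ, (Real.cos w = 1 / 4 ∨ Real.cos w = -(1 / 4)) →
          δ ≤ ‖z - (w : ℂ)‖) →
        c * Real.exp (3 * |z.im|) ≤
          ‖(15 / 4) * Complex.cos z * Complex.sin z ^ 2
            - Complex.sin z ^ 4 / (4 * Complex.cos z)‖ := by
  obtain ⟨c, hc, hg₀⟩ := exists_pos_mul_exp_le_norm_of_periodic continuous_g₀ Real.pi_pos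
    g₀_periodic (by norm_num : (0 : ℝ) < 8⁻¹) hδ fun z => inv_eight_mul_exp_le_norm_g₀
  refine ⟨c / 4, by positivity, fun z hcos hk hw => ?_⟩
  have hz : c * Real.exp (4 * |z.im|) ≤ ‖g₀ z‖ := hg₀ z fun w hw₀ => by
    rcases eq_int_mul_pi_or_ofReal_of_g₀_eq_zero hw₀ with ⟨k, rfl⟩ | ⟨r, hr, rfl⟩
    exacts [hk k, hw r hr]
  have hnorm : ‖g₀ z‖ = 4 * ‖cos z‖ * ‖f₀ z‖ := by
    rw [← four_mul_cos_mul_f₀ hcos, norm_mul, norm_mul, Complex.norm_ofNat]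
  have hexp : Real.exp (4 * |z.im|) = Real.exp (3 * |z.im|) * Real.exp |z.im| := by
    rw [← Real.exp_add]
    ring_nf
  change c / 4 * Real.exp (3 * |z.im|) ≤ ‖f₀ z‖
  refine le_of_mul_le_mul_right ?_ (Real.exp_pos |z.im|)
  calc c / 4 * Real.exp (3 * |z.im|) * Real.exp |z.im|
      ≤ ‖cos z‖ * ‖f₀ z‖ := by rw [hexp] at hz; linarith
    _ ≤ ‖f₀ z‖ * Real.exp |z.im| := by
        rw [mul_comm]
        gcongr
        exact norm_cos_le_exp_abs_im z
end

section
/- Let q : ℝ → ℝ be integrable on [0,1], set Q = ∫₀¹ |q(t)| dt, and let ρ ∈ ℂ with ρ ≠ 0, τ = |Im ρ|. Suppose u : ℝ → ℂ is continuous on [0,1] and satisfies the Volterra integral equation u(x) = sin(ρx)/ρ + ∫₀ˣ (sin(ρ(x−t))/ρ)·q(t)·u(t) dt for all x ∈ [0,1]. Then for every x ∈ [0,1], |u(x) − sin(ρx)/ρ| ≤ (Q/|ρ|²)·exp(τ·x + Q/|ρ|). -/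
/-!
Put `τ = |Im ρ|` and `f(t) = |u(t)| e^{-τt}`. Since `|sin(ρs)| ≤ e^{τs}` for `s ≥ 0`, the Volterra
equation gives `f(x) ≤ 1/|ρ| + ∫₀ˣ (|q|/|ρ|) f`, so Grönwall's inequality (for an integrable
kernel, proved via the fundamental theorem of calculus for absolutely continuous functions)
yields `f ≤ e^{Q/|ρ|}/|ρ|`. Inserting this bound into the integral term of the equation gives the
estimate.
-/

open Set Filter MeasureTheory

theorem LipschitzOnWith.comp_absolutelyContinuousOnInterval {X Y : Type*} [PseudoMetricSpace X]
    [PseudoMetricSpace Y] {φ : X → Y} {g : ℝ → X} {K : NNReal} {s : Set X} {a b : ℝ}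
    (hφ : LipschitzOnWith K φ s) (hg : AbsolutelyContinuousOnInterval g a b)
    (hgs : MapsTo g (uIcc a b) s) : AbsolutelyContinuousOnInterval (φ ∘ g) a b := by
  rw [absolutelyContinuousOnInterval_iff] at hg ⊢
  intro ε hε
  obtain ⟨δ, hδ, hgδ⟩ := hg (ε / (K + 1)) (by positivity)
  refine ⟨δ, hδ, fun E hE hEδ => ?_⟩
  calc ∑ i ∈ Finset.range E.1, dist ((φ ∘ g) (E.2 i).1) ((φ ∘ g) (E.2 i).2)
      ≤ ∑ i ∈ Finset.range E.1, K * dist (g (E.2 i).1) (g (E.2 i).2) :=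
        Finset.sum_le_sum fun i hi =>
          hφ.dist_le_mul _ (hgs (hE.1 i hi).1) _ (hgs (hE.1 i hi).2)
    _ = K * ∑ i ∈ Finset.range E.1, dist (g (E.2 i).1) (g (E.2 i).2) := (Finset.mul_sum ..).symm
    _ ≤ K * (ε / (K + 1)) := by gcongr; exact (hgδ E hE hEδ).le
    _ < ε := by
        rw [mul_div_assoc', div_lt_iff₀ (by positivity)]
        nlinarith

theorem Real.lipschitzOnWith_exp_Iic_zero : LipschitzOnWith 1 Real.exp (Iic 0) := by
  refine (convex_Iic 0).lipschitzOnWith_of_nnnorm_hasDerivWithin_le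
    (fun x _ => (Real.hasDerivAt_exp x).hasDerivWithinAt) fun x hx => ?_
  rw [← NNReal.coe_le_coe, coe_nnnorm, Real.norm_of_nonneg (Real.exp_pos x).le]
  simpa using Real.exp_le_one_iff.2 hx

theorem AbsolutelyContinuousOnInterval.le_of_ae_deriv_nonpos {g : ℝ → ℝ} {a b : ℝ} (hab : a ≤ b)
    (hg : AbsolutelyContinuousOnInterval g a b) (hg' : ∀ᵐ y, y ∈ Ioc a b → deriv g y ≤ 0) :
    g b ≤ g a := by
  have hint : ∫ y in a..b, deriv g y ≤ 0 := by
    rw [intervalIntegral.integral_of_le hab]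
    exact integral_nonpos_of_ae ((ae_restrict_iff' measurableSet_Ioc).2 hg')
  linarith [hg.integral_deriv_eq_sub]

theorem le_mul_exp_integral_of_le_add_integral_right {k f : ℝ → ℝ} {a c d : ℝ} (hcd : c ≤ d)
    (hk : IntervalIntegrable k volume c d) (hk0 : ∀ t ∈ Icc c d, 0 ≤ k t)
    (hf : ContinuousOn f (Icc c d)) (h : ∀ x ∈ Icc c d, f x ≤ a + ∫ t in c..x, k t * f t) :
    f d ≤ a * Real.exp (∫ t in c..d, k t) := by
  have hkf : IntervalIntegrable (fun t => k t * f t) volume c d :=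
    hk.mul_continuousOn (by rwa [uIcc_of_le hcd])
  set K : ℝ → ℝ := fun y => ∫ t in c..y, k t
  set Φ : ℝ → ℝ := fun y => a + ∫ t in c..y, k t * f t
  have hK_nonneg : ∀ y ∈ uIcc c d, 0 ≤ K y := by
    intro y hy
    rw [uIcc_of_le hcd] at hy
    exact intervalIntegral.integral_nonneg hy.1 fun t ht => hk0 t ⟨ht.1, ht.2.trans hy.2⟩
  have hE : AbsolutelyContinuousOnInterval (fun y => Real.exp (-K y)) c d :=
    Real.lipschitzOnWith_exp_Iic_zero.comp_absolutelyContinuousOnInterval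
      (hk.absolutelyContinuousOnInterval_intervalIntegral left_mem_uIcc).fun_neg
      fun y hy => neg_nonpos.2 (hK_nonneg y hy)
  have hΦ : AbsolutelyContinuousOnInterval Φ c d :=
    (LipschitzWith.const a).lipschitzOnWith.absolutelyContinuousOnInterval.fun_add
      (hkf.absolutelyContinuousOnInterval_intervalIntegral left_mem_uIcc)
  have hderiv : ∀ᵐ y, y ∈ Ioc c d → deriv (fun y => Φ y * Real.exp (-K y)) y ≤ 0 := by
    filter_upwards [hkf.ae_hasDerivAt_integral, hk.ae_hasDerivAt_integral] with y hΦy hKy hy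
    have hy' : y ∈ uIcc c d := by rw [uIcc_of_le hcd]; exact Ioc_subset_Icc_self hy
    have hGy : HasDerivAt (fun y => Φ y * Real.exp (-K y))
        (k y * f y * Real.exp (-K y) + Φ y * (Real.exp (-K y) * -k y)) y :=
      ((hΦy hy' c left_mem_uIcc).const_add a).mul (hKy hy' c left_mem_uIcc).neg.exp
    rw [uIcc_of_le hcd] at hy'
    rw [hGy.deriv]
    calc _ = k y * Real.exp (-K y) * (f y - Φ y) := by ring
      _ ≤ 0 := mul_nonpos_of_nonneg_of_nonpos
          (mul_nonneg (hk0 y hy') (Real.exp_pos _).le) (sub_nonpos.2 (h y hy'))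
  have hG : Φ d * Real.exp (-K d) ≤ a := by
    simpa [Φ, K] using (hΦ.fun_mul hE).le_of_ae_deriv_nonpos hcd hderiv
  calc f d ≤ Φ d := h d (right_mem_Icc.2 hcd)
    _ = Φ d * Real.exp (-K d) * Real.exp (K d) := by
        rw [mul_assoc, ← Real.exp_add, neg_add_cancel, Real.exp_zero, mul_one]
    _ ≤ a * Real.exp (K d) := by gcongr

theorem le_mul_exp_integral_of_le_add_integral {k f : ℝ → ℝ} {a c d : ℝ}
    (hk : IntervalIntegrable k volume c d) (hk0 : ∀ t ∈ Icc c d, 0 ≤ k t)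
    (hf : ContinuousOn f (Icc c d)) (h : ∀ x ∈ Icc c d, f x ≤ a + ∫ t in c..x, k t * f t) :
    ∀ x ∈ Icc c d, f x ≤ a * Real.exp (∫ t in c..x, k t) := by
  intro x hx
  have hsub : Icc c x ⊆ Icc c d := Icc_subset_Icc le_rfl hx.2
  refine le_mul_exp_integral_of_le_add_integral_right hx.1
    (hk.mono_set ?_) (fun t ht => hk0 t (hsub ht)) (hf.mono hsub) fun y hy => h y (hsub hy)
  rw [uIcc_of_le hx.1, uIcc_of_le (hx.1.trans hx.2)]
  exact hsub

theorem Complex.norm_sin_le_exp_abs_im (z : ℂ) : ‖Complex.sin z‖ ≤ Real.exp |z.im| := by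
  have h2 : ‖2 * Complex.sin z‖ ≤ Real.exp z.im + Real.exp (-z.im) := by
    rw [Complex.two_sin, norm_mul, Complex.norm_I, mul_one]
    refine (norm_sub_le _ _).trans_eq ?_
    simp [Complex.norm_exp]
  rw [norm_mul, Complex.norm_two] at h2
  have := Real.exp_le_exp.2 (le_abs_self z.im)
  have := Real.exp_le_exp.2 (neg_le_abs z.im)
  linarith

open Complex

theorem norm_sin_mul_ofReal_le (ρ : ℂ) {y : ℝ} (hy : 0 ≤ y) :
    ‖sin (ρ * y)‖ ≤ Real.exp (|ρ.im| * y) := by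
  refine (norm_sin_le_exp_abs_im _).trans_eq ?_
  rw [mul_im, ofReal_re, ofReal_im, mul_zero, zero_add, abs_mul, abs_of_nonneg hy]

theorem norm_integral_sin_kernel_le {q : ℝ → ℝ} {u : ℝ → ℂ} (ρ : ℂ) {x : ℝ} (hx : 0 ≤ x)
    (hq : IntervalIntegrable q volume 0 x) (hu : ContinuousOn u (Icc 0 x)) :
    ‖∫ t in (0:ℝ)..x, sin (ρ * ((x:ℂ) - (t:ℂ))) / ρ * (q t : ℂ) * u t‖ ≤
      Real.exp (|ρ.im| * x) / ‖ρ‖ *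
        ∫ t in (0:ℝ)..x, |q t| * (‖u t‖ * Real.exp (-(|ρ.im| * t))) := by
  have hw : ContinuousOn (fun t => ‖u t‖ * Real.exp (-(|ρ.im| * t))) (uIcc 0 x) := by
    rw [uIcc_of_le hx]; fun_prop
  rw [← intervalIntegral.integral_const_mul]
  refine intervalIntegral.norm_integral_le_of_norm_le hx
    (Eventually.of_forall fun t ht => ?_) ((hq.abs.mul_continuousOn hw).const_mul _)
  have hexp : Real.exp (|ρ.im| * x) * Real.exp (-(|ρ.im| * t)) = Real.exp (|ρ.im| * (x - t)) := by
    rw [← Real.exp_add]; ring_nf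
  have hsin : ‖sin (ρ * ((x:ℂ) - (t:ℂ)))‖ ≤ Real.exp (|ρ.im| * (x - t)) := by
    exact_mod_cast norm_sin_mul_ofReal_le ρ (sub_nonneg.2 ht.2)
  calc ‖sin (ρ * ((x:ℂ) - (t:ℂ))) / ρ * (q t : ℂ) * u t‖
      = ‖sin (ρ * ((x:ℂ) - (t:ℂ)))‖ / ‖ρ‖ * |q t| * ‖u t‖ := by
        rw [norm_mul, norm_mul, norm_div, norm_real, Real.norm_eq_abs]
    _ ≤ Real.exp (|ρ.im| * (x - t)) / ‖ρ‖ * |q t| * ‖u t‖ := by gcongr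
    _ = _ := by rw [← hexp]; ring

theorem intervalIntegral.integral_abs_le_of_mem_Icc {q : ℝ → ℝ} {b x : ℝ}
    (hq : IntervalIntegrable q volume 0 b) (hx : x ∈ Icc 0 b) :
    ∫ t in (0:ℝ)..x, |q t| ≤ ∫ t in (0:ℝ)..b, |q t| :=
  integral_mono_interval le_rfl hx.1 hx.2 (Eventually.of_forall fun _ => abs_nonneg _) hq.abs

theorem norm_mul_exp_neg_le_of_volterra_sin {q : ℝ → ℝ} {ρ : ℂ} {u : ℝ → ℂ}
    (hq : IntervalIntegrable q volume 0 1) (hρ : ρ ≠ 0) (hu : ContinuousOn u (Icc 0 1))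
    (heq : ∀ x ∈ Icc (0:ℝ) 1, u x = sin (ρ * x) / ρ +
      ∫ t in (0:ℝ)..x, sin (ρ * ((x:ℂ) - (t:ℂ))) / ρ * (q t : ℂ) * u t) :
    ∀ x ∈ Icc (0:ℝ) 1, ‖u x‖ * Real.exp (-(|ρ.im| * x)) ≤
      Real.exp ((∫ t in (0:ℝ)..1, |q t|) / ‖ρ‖) / ‖ρ‖ := by
  have hr : 0 < ‖ρ‖ := norm_pos_iff.2 hρ
  set f : ℝ → ℝ := fun t => ‖u t‖ * Real.exp (-(|ρ.im| * t))
  have hvolterra : ∀ x ∈ Icc (0:ℝ) 1, f x ≤ 1 / ‖ρ‖ + ∫ t in (0:ℝ)..x, |q t| / ‖ρ‖ * f t := by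
    intro x hx
    have hrem := norm_integral_sin_kernel_le ρ hx.1
      (hq.mono_set (uIcc_subset_uIcc left_mem_uIcc (Icc_subset_uIcc hx)))
      (hu.mono (Icc_subset_Icc le_rfl hx.2))
    have hsin : ‖sin (ρ * x) / ρ‖ ≤ Real.exp (|ρ.im| * x) / ‖ρ‖ := by
      rw [norm_div]; gcongr; exact norm_sin_mul_ofReal_le ρ hx.1
    have hu_le : ‖u x‖ ≤ Real.exp (|ρ.im| * x) / ‖ρ‖ * (1 + ∫ t in (0:ℝ)..x, |q t| * f t) := by
      rw [heq x hx, mul_one_add]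
      exact (norm_add_le _ _).trans (add_le_add hsin hrem)
    calc f x ≤ Real.exp (|ρ.im| * x) / ‖ρ‖ * (1 + ∫ t in (0:ℝ)..x, |q t| * f t) *
          Real.exp (-(|ρ.im| * x)) :=
          mul_le_mul_of_nonneg_right hu_le (Real.exp_pos _).le
      _ = 1 / ‖ρ‖ + ∫ t in (0:ℝ)..x, |q t| / ‖ρ‖ * f t := by
        simp_rw [div_mul_eq_mul_div, intervalIntegral.integral_div]
        rw [Real.exp_neg]
        field_simp
  intro x hx
  calc f x ≤ 1 / ‖ρ‖ * Real.exp (∫ t in (0:ℝ)..x, |q t| / ‖ρ‖) :=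
        le_mul_exp_integral_of_le_add_integral (hq.abs.div_const _)
          (fun t _ => by positivity) (by fun_prop) hvolterra x hx
    _ ≤ Real.exp ((∫ t in (0:ℝ)..1, |q t|) / ‖ρ‖) / ‖ρ‖ := by
        rw [intervalIntegral.integral_div, one_div_mul_eq_div]
        gcongr
        exact intervalIntegral.integral_abs_le_of_mem_Icc hq hx

/-- Estimate for the solution of the Volterra integral equation
satisfied by the fundamental solution `S(λ,·)` (with `u(0) = 0`, `u'(0) = 1`). -/
theorem stmt_8 (q : ℝ → ℝ) (hq : IntegrableOn q (Set.Icc 0 1))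
    (Q : ℝ) (hQ : Q = ∫ t in (0:ℝ)..1, |q t|)
    (ρ : ℂ) (hρ : ρ ≠ 0) (τ : ℝ) (hτ : τ = |ρ.im|)
    (u : ℝ → ℂ) (hu : ContinuousOn u (Set.Icc 0 1))
    (heq : ∀ x ∈ Set.Icc (0:ℝ) 1,
      u x = Complex.sin (ρ * x) / ρ +
        ∫ t in (0:ℝ)..x, (Complex.sin (ρ * ((x:ℂ) - (t:ℂ))) / ρ) * (q t : ℂ) * u t) :
    ∀ x ∈ Set.Icc (0:ℝ) 1,
      ‖u x - Complex.sin (ρ * x) / ρ‖ ≤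
        (Q / ‖ρ‖ ^ 2) * Real.exp (τ * x + Q / ‖ρ‖) := by
  subst hτ
  intro x hx
  have hq' : IntervalIntegrable q volume 0 1 :=
    (intervalIntegrable_iff_integrableOn_Icc_of_le zero_le_one).2 hq
  have hqx : IntervalIntegrable q volume 0 x :=
    hq'.mono_set (uIcc_subset_uIcc left_mem_uIcc (Icc_subset_uIcc hx))
  have hux : ContinuousOn u (Icc 0 x) := hu.mono (Icc_subset_Icc le_rfl hx.2)
  have hsol := norm_mul_exp_neg_le_of_volterra_sin hq' hρ hu heq
  rw [← hQ] at hsol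
  have hint : IntervalIntegrable (fun t => |q t| * (‖u t‖ * Real.exp (-(|ρ.im| * t)))) volume 0 x :=
    hqx.abs.mul_continuousOn (by rw [uIcc_of_le hx.1]; fun_prop)
  rw [heq x hx, add_sub_cancel_left]
  calc _ ≤ Real.exp (|ρ.im| * x) / ‖ρ‖ *
        ∫ t in (0:ℝ)..x, |q t| * (‖u t‖ * Real.exp (-(|ρ.im| * t))) :=
        norm_integral_sin_kernel_le ρ hx.1 hqx hux
    _ ≤ Real.exp (|ρ.im| * x) / ‖ρ‖ * ∫ t in (0:ℝ)..x, |q t| * (Real.exp (Q / ‖ρ‖) / ‖ρ‖) := by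
        gcongr
        exact intervalIntegral.integral_mono_on hx.1 hint (hqx.abs.mul_const _) fun t ht =>
          mul_le_mul_of_nonneg_left (hsol t ⟨ht.1, ht.2.trans hx.2⟩) (abs_nonneg _)
    _ ≤ Real.exp (|ρ.im| * x) / ‖ρ‖ * (Q * (Real.exp (Q / ‖ρ‖) / ‖ρ‖)) := by
        rw [intervalIntegral.integral_mul_const]
        gcongr
        exact hQ ▸ intervalIntegral.integral_abs_le_of_mem_Icc hq' hx
    _ = Q / ‖ρ‖ ^ 2 * Real.exp (|ρ.im| * x + Q / ‖ρ‖) := by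
        rw [Real.exp_add]; ring
end

section
/- Let z ∈ ℂ with z ≠ 0, sin z ≠ 0 and cos z ≠ 0, set m(z) = (z·sin z)/(4·cos z) − (3·z·cos z)/(4·sin z), and let A₀(z) be the 4×4 complex matrix with rows ((sin z)/z, 0, 0, −1), (0, (sin z)/z, 0, −1), (0, 0, (sin z)/z, −1) and (cos z, cos z, cos z, −m(z)). Then A₀(z) is invertible if and only if cos z ≠ 1/4 and cos z ≠ −1/4. -/
open Complex Matrix

/-!
`A₀(z)` borders the scalar block `a • 1`, `a = sin z / z`, so its determinant is
`a² (a d + 3 cos z)` with `d = -m(z)`. By `sin² z + cos² z = 1` the Schur complement is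
`a d + 3 cos z = (4 cos z - 1)(4 cos z + 1) / (4 cos z)`, and `a ≠ 0`, so the determinant
vanishes exactly when `cos z = ± 1/4`.
-/

theorem det_scalar_bordered {R : Type*} [CommRing R] (a c d : R) :
    !![a, 0, 0, -1; 0, a, 0, -1; 0, 0, a, -1; c, c, c, d].det = a ^ 2 * (a * d + 3 * c) := by
  simp [det_succ_row_zero, Fin.sum_univ_succ, Fin.succAbove]
  ring

theorem four_mul_sub_one_mul_four_mul_add_one_ne_zero_iff {K : Type*} [Field K] [CharZero K]
    (w : K) :
    (4 * w - 1) * (4 * w + 1) ≠ 0 ↔ w ≠ 1 / 4 ∧ w ≠ -(1 / 4) := by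
  rw [mul_ne_zero_iff]
  refine and_congr (not_congr ⟨fun h ↦ ?_, fun h ↦ ?_⟩) (not_congr ⟨fun h ↦ ?_, fun h ↦ ?_⟩)
  · linear_combination h / 4
  · linear_combination 4 * h
  · linear_combination h / 4
  · linear_combination 4 * h

/-- Invertibility of the coefficient matrix `A₀(z)`. -/
theorem stmt_9 (z : ℂ) (hz : z ≠ 0) (hs : Complex.sin z ≠ 0)
    (hc : Complex.cos z ≠ 0) (m : ℂ)
    (hm : m = z * Complex.sin z / (4 * Complex.cos z)
            - 3 * z * Complex.cos z / (4 * Complex.sin z)) :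
    IsUnit
      (!![Complex.sin z / z, 0, 0, -1;
          0, Complex.sin z / z, 0, -1;
          0, 0, Complex.sin z / z, -1;
          Complex.cos z, Complex.cos z, Complex.cos z, -m] :
        Matrix (Fin 4) (Fin 4) ℂ) ↔
      (Complex.cos z ≠ 1 / 4 ∧ Complex.cos z ≠ -(1 / 4)) := by
  have hschur : sin z / z * -m + 3 * cos z
      = (4 * cos z - 1) * (4 * cos z + 1) / (4 * cos z) := by
    rw [hm]
    field_simp
    linear_combination (-1 : ℂ) * sin_sq_add_cos_sq z
  rw [isUnit_iff_isUnit_det, isUnit_iff_ne_zero, det_scalar_bordered, hschur,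
    ← four_mul_sub_one_mul_four_mul_add_one_ne_zero_iff]
  simp [hs, hz, hc]
end
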